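/- Strict energy decrease away from equilibria: if θ : ℝ → ℝ^N is differentiable with θ'(t) = f(θ(t)) for all t, and at some time t₀ the state is not an equilibrium (f(θ(t₀)) ≠ 0), then the derivative of t ↦ E(θ(t)) at t₀ is strictly negative. -/

import Mathlib

/-- The OIM energy (Lyapunov) function
`E(θ) = -K ∑_{i ≠ j} W i j cos(θ i - θ j) - K_s ∑ i cos(2 θ i)`. -/
noncomputable def oimEnergy (N : ℕ) (W : Fin N → Fin N → ℝ) (K Ks : ℝ)
    (θ : Fin N → ℝ) : ℝ :=
  -K * ∑ i, ∑ j ∈ Finset.univ.filter (fun j => j ≠ i), W i j * Real.cos (θ i - θ j)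
    - Ks * ∑ i, Real.cos (2 * θ i)

/-- The OIM vector field
`f(θ) i = -K ∑_{j ≠ i} W i j sin(θ i - θ j) - K_s sin(2 θ i)`. -/
noncomputable def oimField (N : ℕ) (W : Fin N → Fin N → ℝ) (K Ks : ℝ)
    (θ : Fin N → ℝ) : Fin N → ℝ :=
  fun i => -K * ∑ j ∈ Finset.univ.filter (fun j => j ≠ i), W i j * Real.sin (θ i - θ j)
    - Ks * Real.sin (2 * θ i)

/-!
Along the flow, `d/dt E(θ(t)) = ⟨∇E(θ), f(θ)⟩`. For symmetric `W` the coupling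
`W i j sin(θ i - θ j)` is antisymmetric in `(i, j)`, so the two halves of the pairwise term
of `∇E` coincide and `∇E = -2 f`. Hence `d/dt E(θ(t)) = -2 ‖f(θ(t))‖²`, which is negative
whenever `f(θ(t)) ≠ 0`.
-/

open Finset Matrix

theorem sum_sum_mul_sub_of_antisymm {ι R : Type*} [Fintype ι] [CommRing R]
    {A : ι → ι → R} (hA : ∀ i j, A j i = -A i j) (v : ι → R) :
    ∑ i, ∑ j, A i j * (v i - v j) = 2 * ∑ i, (∑ j, A i j) * v i := by
  have hswap : ∑ i, ∑ j, A i j * v j = -∑ i, (∑ j, A i j) * v i := by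
    rw [sum_comm, ← sum_neg_distrib]
    refine sum_congr rfl fun i _ => ?_
    rw [sum_mul, ← sum_neg_distrib]
    exact sum_congr rfl fun j _ => by rw [hA, neg_mul]
  simp only [mul_sub, sum_sub_distrib, hswap, sum_mul]
  ring

theorem sum_sum_filter_ne_eq_sum_sum {ι M : Type*} [Fintype ι] [DecidableEq ι]
    [AddCommMonoid M] {f : ι → ι → M} (hf : ∀ i, f i i = 0) :
    ∑ i, ∑ j ∈ univ.filter (fun j => j ≠ i), f i j = ∑ i, ∑ j, f i j :=
  sum_congr rfl fun i _ => by rw [filter_ne', sum_erase _ (hf i)]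

theorem oimField_apply_eq_sum (N : ℕ) (W : Fin N → Fin N → ℝ) (K Ks : ℝ) (u : Fin N → ℝ)
    (i : Fin N) :
    oimField N W K Ks u i = -K * ∑ j, W i j * Real.sin (u i - u j) - Ks * Real.sin (2 * u i) := by
  rw [oimField, filter_ne', sum_erase _ (by simp)]

theorem hasDerivAt_oimEnergy_comp {N : ℕ} {W : Fin N → Fin N → ℝ}
    (hsymm : ∀ i j, W i j = W j i) (K Ks : ℝ) {x : ℝ → Fin N → ℝ} {v : Fin N → ℝ} {t : ℝ}
    (hx : HasDerivAt x v t) :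
    HasDerivAt (fun s => oimEnergy N W K Ks (x s)) (-2 * (oimField N W K Ks (x t) ⬝ᵥ v)) t := by
  set u := x t
  have hcomp (i : Fin N) : HasDerivAt (fun s => x s i) (v i) t := hasDerivAt_pi.1 hx i
  have hE : HasDerivAt (fun s => oimEnergy N W K Ks (x s))
      (-K * ∑ i, ∑ j ∈ univ.filter (fun j => j ≠ i),
          W i j * (-Real.sin (u i - u j) * (v i - v j))
        - Ks * ∑ i, -Real.sin (2 * u i) * (2 * v i)) t :=
    ((HasDerivAt.fun_sum fun i _ => HasDerivAt.fun_sum fun j _ =>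
        (((hcomp i).sub (hcomp j)).cos).const_mul (W i j)).const_mul (-K)).sub
      ((HasDerivAt.fun_sum fun i _ => ((hcomp i).const_mul 2).cos).const_mul Ks)
  convert hE using 1
  have hpair := sum_sum_mul_sub_of_antisymm (A := fun i j => W i j * Real.sin (u i - u j))
    (fun i j => by rw [hsymm, ← neg_sub, Real.sin_neg, mul_neg]) v
  rw [sum_sum_filter_ne_eq_sum_sum (by simp)]
  simp only [mul_neg, neg_mul, ← mul_assoc, sum_neg_distrib, hpair]
  simp only [dotProduct, oimField_apply_eq_sum, sub_mul, neg_mul, sum_sub_distrib, sum_neg_distrib,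
    mul_assoc, mul_left_comm _ (2 : ℝ), ← mul_sum]
  ring

theorem oim_strict_energy_decrease_general (N : ℕ) (W : Fin N → Fin N → ℝ)
    (hsymm : ∀ i j, W i j = W j i)
    (K Ks : ℝ) (θ : ℝ → Fin N → ℝ) (hθ : Differentiable ℝ θ)
    (hode : ∀ t, deriv θ t = oimField N W K Ks (θ t))
    (t₀ : ℝ) (hne : oimField N W K Ks (θ t₀) ≠ 0) :
    deriv (fun t : ℝ => oimEnergy N W K Ks (θ t)) t₀ < 0 := by
  have hθ₀ : HasDerivAt θ (oimField N W K Ks (θ t₀)) t₀ := hode t₀ ▸ (hθ t₀).hasDerivAt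
  rw [(hasDerivAt_oimEnergy_comp hsymm K Ks hθ₀).deriv]
  have hpos : 0 < oimField N W K Ks (θ t₀) ⬝ᵥ oimField N W K Ks (θ t₀) := by
    simpa using dotProduct_self_star_pos_iff.2 hne
  linarith

/-- Strict energy decrease away from equilibria: along a differentiable solution
of `θ' = f(θ)`, if `f(θ(t₀)) ≠ 0` then `d/dt E(θ(t))` is strictly negative at
`t₀`. -/
theorem oim_strict_energy_decrease (N : ℕ) (W : Fin N → Fin N → ℝ)
    (hsymm : ∀ i j, W i j = W j i) (hdiag : ∀ i, W i i = 0)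
    (K Ks : ℝ) (θ : ℝ → Fin N → ℝ) (hθ : Differentiable ℝ θ)
    (hode : ∀ t, deriv θ t = oimField N W K Ks (θ t))
    (t₀ : ℝ) (hne : oimField N W K Ks (θ t₀) ≠ 0) :
    deriv (fun t : ℝ => oimEnergy N W K Ks (θ t)) t₀ < 0 :=
  oim_strict_energy_decrease_general N W hsymm K Ks θ hθ hode t₀ hne
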